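/- arXiv:1711.01494 — 4 statements merged into one kernel-verified Lean document; each statement's English description precedes it below -/
import Mathlib

section
/- Let L be an infinite locally compact Hausdorff topological space and let 𝒜 be a somewhat regular linear subspace of C₀(L). Then for every non-empty open subset V of L and every real number ε with 0 < ε < 1 there exist a point x₀ ∈ V and a function f ∈ 𝒜 such that (1) f(x₀) = 1 ≤ ‖f‖ ≤ 1 + ε; (2) |1 − f(x)| ≤ 1 + ε for every x ∈ V; and (3) |f(x)| ≤ ε for every x ∈ L \ V. -/
open scoped ZeroAtInfty

/-- A linear subspace `𝒜` of `C₀(L, ℝ)` is *somewhat regular* if for every non-empty open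
subset `V` of `L` and every `ε` with `0 < ε < 1` there is `f ∈ 𝒜` with `‖f‖ = 1` and
`|f x| ≤ ε` for every `x ∈ L \ V`. -/
def SomewhatRegular {L : Type*} [TopologicalSpace L]
    (𝒜 : Submodule ℝ C₀(L, ℝ)) : Prop :=
  ∀ V : Set L, IsOpen V → V.Nonempty → ∀ ε : ℝ, 0 < ε → ε < 1 →
    ∃ f ∈ 𝒜, ‖f‖ = 1 ∧ ∀ x ∉ V, |f x| ≤ ε

/-!
A single norm-one `g ∈ 𝒜` that is small off `V` peaks near `1` somewhere in `V`, but may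
dip to `-1` elsewhere in `V`. Iterating inside the successive peak sets `V ⊇ U₁ ⊇ U₂ ⊇ ⋯`
gives `s = g₁ + ⋯ + gₙ ∈ 𝒜` with `s ≥ n(1 - δ)` on `Uₙ`, `|s| ≤ nδ` off `V` and
`s ≥ -1 - nδ` on `V`: at a point of `V` at most one summand is very negative, namely the
one for which the point has just left the peak set. Dividing by the value at a point of `Uₙ`
and taking `n` large makes that single negative dip negligible.
-/

namespace ZeroAtInftyContinuousMap

variable {α β : Type*} [TopologicalSpace α] [SeminormedAddCommGroup β]

theorem norm_apply_le_norm (f : C₀(α, β)) (x : α) : ‖f x‖ ≤ ‖f‖ :=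
  norm_toBCF_eq_norm (f := f) ▸ f.toBCF.norm_coe_le_norm x

theorem norm_le_of_forall_norm_apply_le (f : C₀(α, β)) {C : ℝ} (hC : 0 ≤ C)
    (h : ∀ x, ‖f x‖ ≤ C) : ‖f‖ ≤ C :=
  norm_toBCF_eq_norm (f := f) ▸ (BoundedContinuousFunction.norm_le hC).2 h

end ZeroAtInftyContinuousMap

namespace SomewhatRegular

open ZeroAtInftyContinuousMap

variable {L : Type*} [TopologicalSpace L] {𝒜 : Submodule ℝ C₀(L, ℝ)}

/-- The peak set `{x | 1 - δ < g x}` lies in `W` because `g` is at most `δ < 1 - δ` off `W`. -/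
theorem exists_peak (h𝒜 : SomewhatRegular 𝒜) {δ : ℝ} (hδ0 : 0 < δ) (hδ : δ < 1 / 2)
    {W : Set L} (hW : IsOpen W) (hWne : W.Nonempty) :
    ∃ g ∈ 𝒜, ‖g‖ = 1 ∧ (∀ x ∉ W, |g x| ≤ δ) ∧
      {x | 1 - δ < g x}.Nonempty ∧ {x | 1 - δ < g x} ⊆ W := by
  obtain ⟨g, hg𝒜, hg1, hgW⟩ := h𝒜 W hW hWne δ hδ0 (by linarith)
  obtain ⟨x, hx⟩ : ∃ x, 1 - δ < |g x| := by
    by_contra! h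
    have := g.norm_le_of_forall_norm_apply_le (by linarith) h
    linarith
  have peak_subset {g : C₀(L, ℝ)} (hgW : ∀ x ∉ W, |g x| ≤ δ) : {x | 1 - δ < g x} ⊆ W :=
    fun x hx ↦ by_contra fun hxW ↦ by linarith [le_abs_self (g x), hgW x hxW, hx.out]
  rcases le_or_gt 0 (g x) with hpos | hneg
  · exact ⟨g, hg𝒜, hg1, hgW, ⟨x, by rwa [abs_of_nonneg hpos] at hx⟩, peak_subset hgW⟩
  · have hgW' : ∀ x ∉ W, |(-g) x| ≤ δ := by simpa using hgW
    exact ⟨-g, neg_mem hg𝒜, by rw [norm_neg, hg1], hgW',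
      ⟨x, by simpa [abs_of_neg hneg] using hx⟩, peak_subset hgW'⟩

theorem exists_sum_peak (h𝒜 : SomewhatRegular 𝒜) {δ : ℝ} (hδ0 : 0 < δ) (hδ : δ < 1 / 2)
    {V : Set L} (hV : IsOpen V) (hVne : V.Nonempty) (n : ℕ) :
    ∃ U ⊆ V, U.Nonempty ∧ IsOpen U ∧ ∃ s ∈ 𝒜, ‖s‖ ≤ n ∧
      (∀ x ∈ U, n * (1 - δ) ≤ s x) ∧
      (∀ x ∈ V, -1 - n * δ ≤ s x) ∧
      (∀ x ∉ V, |s x| ≤ n * δ) := by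
  induction n with
  | zero => exact ⟨V, subset_rfl, hVne, hV, 0, zero_mem _, by simp, by simp, by simp, by simp⟩
  | succ n ih =>
    obtain ⟨U, hUV, hUne, hU, s, hs𝒜, hs, hsU, hsV, hsVc⟩ := ih
    obtain ⟨g, hg𝒜, hg1, hgU, hpeak, hpeakU⟩ := h𝒜.exists_peak hδ0 hδ hU hUne
    have hg x : |g x| ≤ 1 := hg1 ▸ g.norm_apply_le_norm x
    refine ⟨_, hpeakU.trans hUV, hpeak, isOpen_lt continuous_const g.continuous,
      s + g, add_mem hs𝒜 hg𝒜, ?_, fun x hx ↦ ?_, fun x hx ↦ ?_, fun x hx ↦ ?_⟩ <;>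
      simp only [Nat.cast_succ, coe_add, Pi.add_apply]
    · linarith [norm_add_le s g]
    · linarith [hsU x (hpeakU hx), hx.out]
    · by_cases hxU : x ∈ U
      · nlinarith [hsU x hxU, abs_le.1 (hg x)]
      · linarith [hsV x hx, abs_le.1 (hgU x hxU)]
    · linarith [abs_add_le (s x) (g x), hsVc x hx, hgU x fun hxU ↦ hx (hUV hxU)]

end SomewhatRegular

theorem urysohn_for_somewhat_regular_general
    {L : Type*} [TopologicalSpace L]
    (𝒜 : Submodule ℝ C₀(L, ℝ)) (h𝒜 : SomewhatRegular 𝒜)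
    (V : Set L) (hV : IsOpen V) (hVne : V.Nonempty)
    (ε : ℝ) (hε0 : 0 < ε) (hε1 : ε < 1) :
    ∃ x₀ ∈ V, ∃ f ∈ 𝒜,
      f x₀ = 1 ∧ 1 ≤ ‖f‖ ∧ ‖f‖ ≤ 1 + ε ∧
      (∀ x ∈ V, |1 - f x| ≤ 1 + ε) ∧
      (∀ x ∉ V, |f x| ≤ ε) := by
  obtain ⟨n, hn⟩ := exists_nat_ge (4 / ε)
  have hnε : 4 ≤ n * ε := (div_le_iff₀ hε0).1 hn
  obtain ⟨U, hUV, ⟨x₀, hx₀⟩, -, s, hs𝒜, hs, hsU, hsV, hsVc⟩ :=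
    h𝒜.exists_sum_peak (δ := ε / 4) (by positivity) (by linarith) hV hVne n
  set c := s x₀
  have hc : n * (1 - ε / 4) ≤ c := hsU x₀ hx₀
  have hc0 : 0 < c := by nlinarith
  have hnc : n ≤ (1 + ε) * c := by nlinarith
  have hdip : 1 + n * (ε / 4) ≤ ε * c := by nlinarith
  have hf x : (c⁻¹ • s) x = s x / c := by simp [div_eq_inv_mul]
  have hfx₀ : (c⁻¹ • s) x₀ = 1 := by rw [hf, div_self hc0.ne']
  have hfnorm : ‖c⁻¹ • s‖ ≤ 1 + ε := by
    rw [norm_smul, norm_inv, Real.norm_of_nonneg hc0.le, inv_mul_le_iff₀ hc0]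
    nlinarith
  refine ⟨x₀, hUV hx₀, c⁻¹ • s, 𝒜.smul_mem _ hs𝒜, hfx₀, ?_, hfnorm, fun x hx ↦ ?_,
    fun x hx ↦ ?_⟩
  · simpa [hfx₀] using (c⁻¹ • s).norm_apply_le_norm x₀
  · have hfx := (Real.le_norm_self _).trans ((c⁻¹ • s).norm_apply_le_norm x)
    have hdip_x : -ε ≤ s x / c := by
      rw [le_div_iff₀ hc0]
      linarith [hsV x hx]
    rw [hf] at hfx ⊢
    rw [abs_le]
    constructor <;> linarith
  · rw [hf, abs_div, abs_of_pos hc0, div_le_iff₀ hc0]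
    linarith [hsVc x hx]

theorem urysohn_for_somewhat_regular
    {L : Type*} [TopologicalSpace L] [LocallyCompactSpace L] [T2Space L] [Infinite L]
    (𝒜 : Submodule ℝ C₀(L, ℝ)) (h𝒜 : SomewhatRegular 𝒜)
    (V : Set L) (hV : IsOpen V) (hVne : V.Nonempty)
    (ε : ℝ) (hε0 : 0 < ε) (hε1 : ε < 1) :
    ∃ x₀ ∈ V, ∃ f ∈ 𝒜,
      f x₀ = 1 ∧ 1 ≤ ‖f‖ ∧ ‖f‖ ≤ 1 + ε ∧
      (∀ x ∈ V, |1 - f x| ≤ 1 + ε) ∧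
      (∀ x ∉ V, |f x| ≤ ε) :=
  urysohn_for_somewhat_regular_general 𝒜 h𝒜 V hV hVne ε hε0 hε1
end

section
/- Let L be an infinite locally compact Hausdorff topological space that is not compact, let 𝒜 be a somewhat regular linear subspace of C₀(L), let n ∈ ℕ, let f₁, …, fₙ ∈ 𝒜 have norm 1, and let ε with 0 < ε < 1 be given. Then there exists f ∈ 𝒜 such that ‖f‖ = 1 and, for every j ∈ {1, …, n}, both ‖fⱼ + f‖ ≤ 1 + ε and ‖fⱼ − f‖ ≤ 1 + ε. -/
open scoped ZeroAtInfty

theorem somewhat_regular_almost_square_quantitative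
    {L : Type*} [TopologicalSpace L] [LocallyCompactSpace L] [T2Space L] [Infinite L]
    (hL : ¬ CompactSpace L)
    (𝒜 : Submodule ℝ C₀(L, ℝ)) (h𝒜 : SomewhatRegular 𝒜)
    (n : ℕ) (f : Fin n → C₀(L, ℝ)) (hf𝒜 : ∀ j, f j ∈ 𝒜) (hf : ∀ j, ‖f j‖ = 1)
    (ε : ℝ) (hε0 : 0 < ε) (hε1 : ε < 1) :
    ∃ g ∈ 𝒜, ‖g‖ = 1 ∧ ∀ j, ‖f j + g‖ ≤ 1 + ε ∧ ‖f j - g‖ ≤ 1 + ε := by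
  -- For each j, pick a compact set outside which |f j| < ε
  have hK : ∀ j : Fin n, ∃ K : Set L, IsCompact K ∧ ∀ x ∉ K, |f j x| < ε := by
    intro j
    have h := (f j).zero_at_infty'
    have : ∀ᶠ x in Filter.cocompact L, f j x ∈ Metric.ball (0 : ℝ) ε :=
      h (Metric.ball_mem_nhds 0 hε0)
    obtain ⟨K, hKc, hKs⟩ := Filter.mem_cocompact.mp this
    refine ⟨K, hKc, fun x hx => ?_⟩
    have := hKs hx
    simpa [Real.norm_eq_abs, abs_sub_comm] using this
  choose K hKc hKlt using hK
  set Kt : Set L := ⋃ j, K j with hKt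
  have hKtc : IsCompact Kt := isCompact_iUnion hKc
  have hKcl : IsClosed Kt := hKtc.isClosed
  set V : Set L := Ktᶜ with hV
  have hVo : IsOpen V := hKcl.isOpen_compl
  have hVne : V.Nonempty := by
    rw [hV, Set.nonempty_compl]
    intro h
    exact hL ⟨by rw [← h]; exact hKtc⟩
  obtain ⟨g, hg𝒜, hgn, hgsm⟩ := h𝒜 V hVo hVne ε hε0 hε1
  refine ⟨g, hg𝒜, hgn, fun j => ?_⟩
  have hbound : ∀ (s : ℝ) (hs : |s| = 1) (x : L), |f j x + s * g x| ≤ 1 + ε := by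
    intro s hs x
    have hgx : |g x| ≤ 1 := by
      have := (g : C₀(L, ℝ)).toBCF.norm_coe_le_norm x
      rwa [ZeroAtInftyContinuousMap.norm_toBCF_eq_norm, hgn] at this
    have hfx : |f j x| ≤ 1 := by
      have := (f j).toBCF.norm_coe_le_norm x
      rwa [ZeroAtInftyContinuousMap.norm_toBCF_eq_norm, hf j] at this
    by_cases hx : x ∈ V
    · have hfsmall : |f j x| < ε := hKlt j x (by
        intro hxK
        exact hx (Set.mem_iUnion.2 ⟨j, hxK⟩))
      calc |f j x + s * g x| ≤ |f j x| + |s * g x| := abs_add_le _ _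
        _ ≤ ε + 1 := by
            rw [abs_mul, hs, one_mul]
            exact add_le_add hfsmall.le hgx
        _ = 1 + ε := add_comm _ _
    · have hgsmall : |g x| ≤ ε := hgsm x hx
      calc |f j x + s * g x| ≤ |f j x| + |s * g x| := abs_add_le _ _
        _ ≤ 1 + ε := by
            rw [abs_mul, hs, one_mul]
            exact add_le_add hfx hgsmall
  constructor
  · rw [← ZeroAtInftyContinuousMap.norm_toBCF_eq_norm]
    refine BoundedContinuousFunction.norm_le (by positivity) |>.2 fun x => ?_
    simpa [Real.norm_eq_abs] using hbound 1 (by norm_num) x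
  · rw [← ZeroAtInftyContinuousMap.norm_toBCF_eq_norm]
    refine BoundedContinuousFunction.norm_le (by positivity) |>.2 fun x => ?_
    have := hbound (-1) (by norm_num) x
    simpa [Real.norm_eq_abs, sub_eq_add_neg] using this
end

section
/- Let L be an infinite locally compact Hausdorff topological space and let x₀ ∈ L be an accumulation point of L (i.e., x₀ is not an isolated point). Then the linear subspace {f ∈ C₀(L) : f(x₀) = 0} of C₀(L) is somewhat regular. -/
open scoped ZeroAtInfty

/-- The linear subspace `{f ∈ C₀(L) : f x₀ = 0}` of `C₀(L)`. -/
def vanishingAt {L : Type*} [TopologicalSpace L] (x₀ : L) : Submodule ℝ C₀(L, ℝ) where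
  carrier := {f : C₀(L, ℝ) | f x₀ = 0}
  add_mem' := by
    intro a b ha hb
    simp only [Set.mem_setOf_eq] at *
    simp [ha, hb]
  zero_mem' := by simp
  smul_mem' := by
    intro c f hf
    simp only [Set.mem_setOf_eq] at *
    simp [hf]

/-- If `x₀` is an accumulation point of `L` (i.e. not an isolated point), then the subspace
`{f ∈ C₀(L) : f x₀ = 0}` is somewhat regular. -/
theorem vanishingAt_somewhatRegular
    {L : Type*} [TopologicalSpace L] [LocallyCompactSpace L] [T2Space L] [Infinite L]
    (x₀ : L) (hx₀ : ¬ IsOpen ({x₀} : Set L)) :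
    SomewhatRegular (vanishingAt x₀) := by
  intro V hV hVne ε hε hε1
  -- find y ∈ V with y ≠ x₀
  obtain ⟨y, hyV, hyx⟩ : ∃ y ∈ V, y ≠ x₀ := by
    by_contra h
    push_neg at h
    obtain ⟨z, hz⟩ := hVne
    have hzx : z = x₀ := h z hz
    have : V = {x₀} := by
      apply Set.eq_singleton_iff_unique_mem.mpr
      exact ⟨hzx ▸ hz, fun w hw => h w hw⟩
    exact hx₀ (this ▸ hV)
  -- U = V \ {x₀} is open, y ∈ U
  set U : Set L := V \ {x₀} with hU
  have hUopen : IsOpen U := hV.sdiff isClosed_singleton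
  have hyU : y ∈ U := ⟨hyV, hyx⟩
  -- Urysohn: f = 1 on {y}, f = 0 on Uᶜ, compact support, 0 ≤ f ≤ 1
  obtain ⟨f, hf1, hf0, hfc, hf01⟩ :=
    exists_continuous_one_zero_of_isCompact (isCompact_singleton (x := y))
      hUopen.isClosed_compl (by simpa using hyU)
  -- package as C₀
  let g : C₀(L, ℝ) := ⟨f, hfc.is_zero_at_infty⟩
  have hg0 : ∀ x ∉ U, g x = 0 := fun x hx => hf0 hx
  have hgy : g y = 1 := hf1 rfl
  have hgle : ∀ x, |g x| ≤ 1 := by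
    intro x
    have := hf01 x
    rw [abs_le]
    exact ⟨le_trans (by norm_num) (show (0:ℝ) ≤ g x from this.1),
      show g x ≤ 1 from this.2⟩
  refine ⟨g, ?_, ?_, ?_⟩
  · show g x₀ = 0
    exact hg0 x₀ (fun h => h.2 rfl)
  · have h1 : ‖g‖ ≤ 1 := by
      rw [← ZeroAtInftyContinuousMap.norm_toBCF_eq_norm]
      exact BoundedContinuousFunction.norm_le_of_nonempty.mpr
        (fun x => by simpa using hgle x)
    have h2 : (1 : ℝ) ≤ ‖g‖ := by
      rw [← ZeroAtInftyContinuousMap.norm_toBCF_eq_norm]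
      have := BoundedContinuousFunction.norm_coe_le_norm g.toBCF y
      simpa [hgy] using this
    linarith
  · intro x hx
    have : g x = 0 := hg0 x (fun h => hx h.1)
    simp [this, le_of_lt hε]
end

section
/- Every almost square Banach space has the symmetric strong diameter 2 property. That is, if X is a Banach space such that whenever n ∈ ℕ and x₁, …, xₙ ∈ X have norm 1 there exists a sequence (y_k) in the closed unit ball of X with ‖xᵢ + y_k‖ → 1 and ‖xᵢ − y_k‖ → 1 for every i ∈ {1, …, n} and ‖y_k‖ → 1, then whenever n ∈ ℕ, S₁, …, Sₙ are slices of the closed unit ball of X, and ε > 0, there exist xᵢ ∈ Sᵢ for i = 1, …, n and y in the closed unit ball of X such that xᵢ + y ∈ Sᵢ and xᵢ − y ∈ Sᵢ for every i ∈ {1, …, n} and ‖y‖ > 1 − ε. -/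
open Filter Topology

/-- A (real) Banach space `X` is *almost square* if for all finitely many norm-one vectors
`x 1, …, x n` there is a sequence `(y k)` in the closed unit ball with
`‖x i + y k‖ → 1`, `‖x i - y k‖ → 1` for each `i`, and `‖y k‖ → 1`. -/
def AlmostSquare (X : Type*) [NormedAddCommGroup X] [NormedSpace ℝ X] : Prop :=
  ∀ (n : ℕ) (x : Fin n → X), (∀ i, ‖x i‖ = 1) →
    ∃ y : ℕ → X,
      (∀ k, ‖y k‖ ≤ 1) ∧
      (∀ i, Tendsto (fun k => ‖x i + y k‖) atTop (𝓝 1)) ∧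
      (∀ i, Tendsto (fun k => ‖x i - y k‖) atTop (𝓝 1)) ∧
      Tendsto (fun k => ‖y k‖) atTop (𝓝 1)

/-- A Banach space `X` has the *symmetric strong diameter 2 property* if whenever
`S 1, …, S n` are slices of the closed unit ball of `X` (given by norm-one functionals
`xstar i` and `δ i > 0`) and `ε > 0`, there are `x i ∈ S i` and `y` in the closed unit
ball with `x i ± y ∈ S i` for every `i` and `‖y‖ > 1 - ε`. -/
def SymmetricStrongDiameterTwoProperty (X : Type*) [NormedAddCommGroup X]
    [NormedSpace ℝ X] : Prop :=
  ∀ (n : ℕ) (xstar : Fin n → X →L[ℝ] ℝ) (δ : Fin n → ℝ),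
    (∀ i, ‖xstar i‖ = 1) → (∀ i, 0 < δ i) → ∀ ε : ℝ, 0 < ε →
      ∃ (x : Fin n → X) (y : X),
        ‖y‖ ≤ 1 ∧ 1 - ε < ‖y‖ ∧
        ∀ i, (‖x i‖ ≤ 1 ∧ 1 - δ i < xstar i (x i)) ∧
          (‖x i + y‖ ≤ 1 ∧ 1 - δ i < xstar i (x i + y)) ∧
          (‖x i - y‖ ≤ 1 ∧ 1 - δ i < xstar i (x i - y))

/-- Every almost square Banach space has the symmetric strong diameter 2 property. -/
theorem almostSquare_SSD2P (X : Type*) [NormedAddCommGroup X] [NormedSpace ℝ X]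
    [CompleteSpace X] (h : AlmostSquare X) :
    SymmetricStrongDiameterTwoProperty X := by
  intro n xstar δ hxstar hδ ε hε
  set d : Fin n → ℝ := fun i => min (δ i) 1 with hd
  have hd0 : ∀ i, 0 < d i := fun i => lt_min (hδ i) one_pos
  have hd1 : ∀ i, d i ≤ 1 := fun i => min_le_right _ _
  have hdδ : ∀ i, d i ≤ δ i := fun i => min_le_left _ _
  -- bound of functionals
  have hb : ∀ i (z : X), xstar i z ≤ ‖z‖ := by
    intro i z
    calc xstar i z ≤ ‖xstar i z‖ := le_abs_self _
    _ ≤ ‖xstar i‖ * ‖z‖ := (xstar i).le_opNorm z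
    _ = ‖z‖ := by rw [hxstar i, one_mul]
  -- choose norm one u i deep in slice
  have hu : ∀ i, ∃ u : X, ‖u‖ = 1 ∧ 1 - d i / 4 < xstar i u := by
    intro i
    have h1 : max (1 - d i / 4) (1/2) < ‖xstar i‖ := by
      rw [hxstar i]; exact max_lt (by linarith [hd0 i]) (by norm_num)
    obtain ⟨v, hv1, hv2⟩ := (xstar i).exists_lt_apply_of_lt_opNorm h1
    have hvpos : 0 < ‖xstar i v‖ := lt_trans (lt_of_lt_of_le (by norm_num) (le_max_right _ _)) hv2
    have hvne : v ≠ 0 := by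
      intro hv0; rw [hv0, map_zero] at hvpos; simp at hvpos
    have hnv : 0 < ‖v‖ := norm_pos_iff.2 hvne
    refine ⟨‖v‖⁻¹ • (if xstar i v < 0 then -v else v), ?_, ?_⟩
    · rw [norm_smul, norm_inv, norm_norm]
      split <;> simp [norm_neg, inv_mul_cancel₀ hnv.ne']
    · rw [map_smul, smul_eq_mul]
      have hval : xstar i (if xstar i v < 0 then -v else v) = |xstar i v| := by
        split <;> rename_i hc
        · rw [map_neg, abs_of_neg hc]
        · rw [abs_of_nonneg (not_lt.1 hc)]
      rw [hval]
      have habs : 1 - d i / 4 < |xstar i v| := lt_of_le_of_lt (le_max_left _ _) hv2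
      have h2 : |xstar i v| ≤ ‖v‖⁻¹ * |xstar i v| := by
        nth_rewrite 1 [← one_mul |xstar i v|]
        apply mul_le_mul_of_nonneg_right _ (abs_nonneg _)
        rw [le_inv_comm₀] <;> simp [hnv, hv1.le]
      linarith
  choose u hu1 hu2 using hu
  obtain ⟨y, hy1, hyp, hym, hyn⟩ := h n u hu1
  -- threshold η
  set δε : Fin (n+1) → ℝ := Fin.cons (min ε 1) d with hδε
  have hne : (Finset.univ : Finset (Fin (n+1))).Nonempty := ⟨0, Finset.mem_univ 0⟩
  set η : ℝ := Finset.univ.inf' hne δε / 8 with hη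
  have hη0 : 0 < η := by
    have : 0 < Finset.univ.inf' hne δε := by
      rw [Finset.lt_inf'_iff]
      intro i _
      refine Fin.cases ?_ ?_ i
      · exact lt_min hε one_pos
      · intro j; exact hd0 j
    linarith
  have hηε : 8 * η ≤ ε := by
    have h0 := Finset.inf'_le (s := Finset.univ) δε (Finset.mem_univ (0 : Fin (n+1)))
    rw [hδε] at h0; simp only [Fin.cons_zero] at h0
    have h1 := min_le_left ε 1
    rw [hη]; linarith
  have hηd : ∀ i, 8 * η ≤ d i := by
    intro i
    have h0 := Finset.inf'_le (s := Finset.univ) δε (Finset.mem_univ i.succ)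
    rw [hδε] at h0; simp only [Fin.cons_succ] at h0
    rw [hη]; linarith
  -- pick k
  have hev : ∀ᶠ k in atTop, (∀ i, ‖u i + y k‖ < 1 + η) ∧ (∀ i, ‖u i - y k‖ < 1 + η) ∧ 1 - η < ‖y k‖ := by
    refine ((eventually_all.2 fun i => (hyp i).eventually_lt_const (by linarith)).and
      ((eventually_all.2 fun i => (hym i).eventually_lt_const (by linarith)).and
        (hyn.eventually_const_lt (by linarith))))
  obtain ⟨k, hk1, hk2, hk3⟩ := hev.exists
  have hpos : (0:ℝ) < 1 + η := by linarith
  set c : ℝ := (1 + η)⁻¹ with hc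
  have hc0 : 0 < c := inv_pos.2 hpos
  have hcnorm : ∀ z : X, ‖c • z‖ = c * ‖z‖ := by
    intro z; rw [norm_smul, Real.norm_eq_abs, abs_of_pos hc0]
  have hcle : ∀ t : ℝ, t ≤ 1 + η → c * t ≤ 1 := by
    intro t ht
    rw [hc, inv_mul_le_one₀ hpos]; linarith
  refine ⟨fun i => c • u i, c • y k, ?_, ?_, ?_⟩
  · rw [hcnorm]; exact hcle _ (by linarith [hy1 k])
  · rw [hcnorm]
    rw [hc, lt_inv_mul_iff₀ hpos]
    nlinarith [hk3, hη0, hηε]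
  · intro i
    have key : 1 - d i / 2 < c * xstar i (u i) := by
      rw [hc, lt_inv_mul_iff₀ hpos]
      nlinarith [hu2 i, hηd i, hd0 i, hη0]
    have hxval : xstar i (c • u i) = c * xstar i (u i) := by rw [map_smul, smul_eq_mul]
    have hsum : c • u i + c • y k = c • (u i + y k) := (smul_add c _ _).symm
    have hdiff : c • u i - c • y k = c • (u i - y k) := (smul_sub c _ _).symm
    have hns : ‖c • u i + c • y k‖ ≤ 1 := by
      rw [hsum, hcnorm]; exact hcle _ (hk1 i).le
    have hnd : ‖c • u i - c • y k‖ ≤ 1 := by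
      rw [hdiff, hcnorm]; exact hcle _ (hk2 i).le
    have hps : xstar i (c • u i + c • y k) ≤ 1 := le_trans (hb i _) hns
    have hpd : xstar i (c • u i - c • y k) ≤ 1 := le_trans (hb i _) hnd
    have hsum2 : xstar i (c • u i + c • y k) + xstar i (c • u i - c • y k)
        = 2 * (c * xstar i (u i)) := by
      rw [map_add, map_sub, hxval]; ring
    refine ⟨⟨?_, ?_⟩, ⟨hns, ?_⟩, ⟨hnd, ?_⟩⟩
    · rw [hcnorm, hu1 i]; exact hcle _ (by linarith)
    · rw [hxval]; linarith [hdδ i, hd0 i, key]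
    · have := hdδ i; linarith
    · have := hdδ i; linarith
end
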